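/- With the notation of the Gessel–Xin proof, suppose $0 \le s < n$, $0 < r_1 < \cdots < r_s \le n$, $1\le k_i\le b$ for all $i$, and $k_i > a_{r_1} + \cdots + a_{r_s}$ for some $i$. Then the rational function $\mathcal{Q}(b\mid\mathbf{r};\mathbf{k})$ is proper in $x_{r_s}$; more precisely, its degree in $x_{r_s}$ equals $(n-s)(a_{r_1}+\cdots+a_{r_s} - b)$, which is negative. -/

import Mathlib

open Finset
open scoped Classical

noncomputable section

/-- The field `ℚ(q)(x_0, x_1, x_2, …)` of rational functions. -/
abbrev FF : Type := FractionRing (MvPolynomial ℕ (RatFunc ℚ))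

/-- The variable `x_j` as a rational function. -/
def XX (j : ℕ) : FF := algebraMap (MvPolynomial ℕ (RatFunc ℚ)) FF (MvPolynomial.X j)

/-- The parameter `q` as a rational function. -/
def qq : FF := algebraMap (MvPolynomial ℕ (RatFunc ℚ)) FF (MvPolynomial.C RatFunc.X)

/-- The substitution `E_{𝐫,𝐤}`, which replaces `x_{r i}` by `x_{r s} q^(k s - k i)`
for `i = 0, 1, …, s-1` (and leaves the other variables unchanged). -/
def Esub (s : ℕ) (r k : ℕ → ℕ) : ℕ → FF := fun j =>
  if h : ∃ i, i < s ∧ r i = j then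
    XX (r s) * qq ^ ((k s : ℤ) - (k h.choose : ℤ))
  else XX j

/-- `𝒬(b ∣ 𝐫; 𝐤) = E_{𝐫,𝐤}[𝒬(b) ∏_{i=1}^s (1 - x_0/(x_{r i} q^{k i}))]`, where
`𝒬(b) = ∏_{j=1}^n (q x_j/x_0)_{a_j} / ∏_{c=1}^b (1 - x_0/(x_j q^c))
  ⬝ ∏_{1 ≤ i < j ≤ n} (x_i/x_j)_{a_i} (q x_j/x_i)_{a_j}`:
the factors `∏_{i=1}^s (1 - x_0/(x_{r i} q^{k i}))` cancel exactly the factors of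
the denominator of `𝒬(b)` that are taken to zero by `E_{𝐫,𝐤}`, and `E_{𝐫,𝐤}` is
applied to the resulting rational function. -/
def Qrk (n s b : ℕ) (a r k : ℕ → ℕ) : FF :=
  (∏ j ∈ Icc 1 n,
    ((∏ c ∈ range (a j), (1 - qq ^ (c+1) * Esub s r k j / Esub s r k 0)) /
     ∏ c ∈ (Icc 1 b).filter (fun c => ¬ ∃ i ∈ Icc 1 s, r i = j ∧ k i = c),
       (1 - Esub s r k 0 / (Esub s r k j * qq ^ c)))) *
  ∏ j ∈ Icc 1 n, ∏ i ∈ Ioo 0 j,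
    ((∏ c ∈ range (a i), (1 - qq ^ c * Esub s r k i / Esub s r k j)) *
     ∏ c ∈ range (a j), (1 - qq ^ (c+1) * Esub s r k j / Esub s r k i))

/-!
Under `E_{𝐫,𝐤}` the variables `x_{r_0}, …, x_{r_s}` all become `x_{r_s}` times powers of `q`,
so every factor `1 - q^γ x_i/x_j` of `𝒬(b ∣ 𝐫; 𝐤)` becomes `(x' - q^{γ'} x'')/x'` for variables
`x'`, `x''`, whose degree in `x_{r_s}` is `1` if `x_i` collapses onto `x_{r_s}` and `x_j` does not,
and `0` otherwise. Since `x_0 = x_{r_0}` collapses, each of the `n - s` indices `j` that do not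
collapse contributes `-b` through the uncancelled denominator `∏_{c=1}^b (1 - x_0/(x_j q^c))`, and
each pair of such a `j` with some `r_i` contributes `a_{r_i}` through `(x_{r_i}/x_j)_{a_{r_i}}` or
`(q x_{r_i}/x_j)_{a_{r_i}}`. If `𝒬(b ∣ 𝐫; 𝐤) = 0`, the fraction `0 / x_{r_s}^m` does the job.
-/

open MvPolynomial

def PairNeZero {M : Type*} [Zero M] (p : M × M) : Prop := p.1 ≠ 0 ∧ p.2 ≠ 0

lemma pairNeZero_swap_iff {M : Type*} [Zero M] {p : M × M} : PairNeZero p.swap ↔ PairNeZero p :=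
  And.comm

section PairNeZero

variable {M : Type*} [CommMonoidWithZero M] [NoZeroDivisors M]

lemma pairNeZero_mul_iff {p q : M × M} : PairNeZero (p * q) ↔ PairNeZero p ∧ PairNeZero q := by
  simp only [PairNeZero, Prod.fst_mul, Prod.snd_mul, mul_ne_zero_iff]
  tauto

lemma pairNeZero_prod_iff [Nontrivial M] {ι : Type*} {s : Finset ι} {f : ι → M × M} :
    PairNeZero (∏ i ∈ s, f i) ↔ ∀ i ∈ s, PairNeZero (f i) := by
  simp only [PairNeZero, Prod.fst_prod, Prod.snd_prod, prod_ne_zero_iff]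
  exact ⟨fun h i hi => ⟨h.1 i hi, h.2 i hi⟩,
    fun h => ⟨fun i hi => (h i hi).1, fun i hi => (h i hi).2⟩⟩

end PairNeZero

section FractionPair

variable {A : Type*} (K : Type*) [CommRing A] [Field K] [Algebra A K]

def fracHom : A × A →* K where
  toFun p := algebraMap A K p.1 / algebraMap A K p.2
  map_one' := by simp
  map_mul' p q := by simp [div_mul_div_comm]

variable {K}

lemma fracHom_apply (p : A × A) : fracHom K p = algebraMap A K p.1 / algebraMap A K p.2 := rfl

lemma fracHom_swap (p : A × A) : fracHom K p.swap = (fracHom K p)⁻¹ := by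
  simp [fracHom_apply]

lemma fracHom_ne_zero_iff [IsFractionRing A K] {p : A × A} : fracHom K p ≠ 0 ↔ PairNeZero p := by
  simp [fracHom_apply, PairNeZero, not_or]

end FractionPair

section DegreeOfDiff

variable {σ R : Type*} [CommRing R]

def degreeOfDiff (t : σ) (p : MvPolynomial σ R × MvPolynomial σ R) : ℤ :=
  p.1.degreeOf t - p.2.degreeOf t

lemma degreeOfDiff_swap (t : σ) (p : MvPolynomial σ R × MvPolynomial σ R) :
    degreeOfDiff t p.swap = -degreeOfDiff t p := by
  simp [degreeOfDiff]

variable [IsDomain R]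

lemma degreeOfDiff_mul (t : σ) {p q : MvPolynomial σ R × MvPolynomial σ R}
    (hp : PairNeZero p) (hq : PairNeZero q) :
    degreeOfDiff t (p * q) = degreeOfDiff t p + degreeOfDiff t q := by
  simp only [degreeOfDiff, Prod.fst_mul, Prod.snd_mul, degreeOf_mul_eq hp.1 hq.1,
    degreeOf_mul_eq hp.2 hq.2]
  push_cast
  ring

lemma degreeOfDiff_prod (t : σ) {ι : Type*} {s : Finset ι}
    {f : ι → MvPolynomial σ R × MvPolynomial σ R} (h : ∀ i ∈ s, PairNeZero (f i)) :
    degreeOfDiff t (∏ i ∈ s, f i) = ∑ i ∈ s, degreeOfDiff t (f i) := by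
  simp only [degreeOfDiff, Prod.fst_prod, Prod.snd_prod,
    degreeOf_prod_eq _ _ fun i hi => (h i hi).1, degreeOf_prod_eq _ _ fun i hi => (h i hi).2]
  push_cast
  rw [sum_sub_distrib]

lemma degreeOf_C_mul_X {t i : σ} {c : R} (hc : c ≠ 0) :
    degreeOf t (C c * X i : MvPolynomial σ R) = degreeOf t (X i : MvPolynomial σ R) :=
  degreeOf_C_mul _ _ (mem_nonZeroDivisors_of_ne_zero hc)

lemma degreeOf_X_sub_C_mul_X [DecidableEq σ] {t i j : σ} {u : R} (hu : u ≠ 0)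
    (h : (X j - C u * X i : MvPolynomial σ R) ≠ 0) :
    degreeOf t (X j - C u * X i : MvPolynomial σ R) = if i = t ∨ j = t then 1 else 0 := by
  have hCX : degreeOf t (C u * X i : MvPolynomial σ R) = if t = i then 1 else 0 := by
    rw [degreeOf_C_mul_X hu, degreeOf_X]
  rcases eq_or_ne i j with rfl | hij
  · have hX : (X i - C u * X i : MvPolynomial σ R) = C (1 - u) * X i := by
      rw [map_sub, C_1, sub_mul, one_mul]
    rw [hX] at h ⊢
    rw [degreeOf_C_mul_X (C_ne_zero.1 (left_ne_zero_of_mul h)), degreeOf_X]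
    simp [eq_comm]
  rcases eq_or_ne j t with rfl | hj
  · rw [sub_eq_add_neg, degreeOf_add_eq_of_degreeOf_lt] <;> simp [degreeOf_neg, hCX, hij.symm]
  rcases eq_or_ne i t with rfl | hi
  · rw [sub_eq_neg_add, degreeOf_add_eq_of_degreeOf_lt] <;>
      simp [degreeOf_neg, hCX, degreeOf_X_of_ne hj.symm]
  · rw [if_neg (by tauto)]
    refine Nat.eq_zero_of_le_zero ((degreeOf_sub_le _ _ _).trans ?_)
    simp [hCX, degreeOf_X_of_ne hj.symm, hi.symm]

lemma degreeOfDiff_X_sub_C_mul_X [DecidableEq σ] {t i j : σ} {u : R} (hu : u ≠ 0)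
    (h : (X j - C u * X i : MvPolynomial σ R) ≠ 0) :
    degreeOfDiff t (X j - C u * X i, X j) = if i = t ∧ j ≠ t then 1 else 0 := by
  rw [degreeOfDiff, degreeOf_X_sub_C_mul_X hu h, degreeOf_X]
  by_cases hi : i = t <;> by_cases hj : t = j <;> simp [hi, hj, Ne.symm]

end DegreeOfDiff

lemma sum_sum_lt_add_swap {ι M : Type*} [LinearOrder ι] [AddCommMonoid M] (S : Finset ι)
    (g : ι → ι → M) (hg : ∀ i, g i i = 0) :
    ∑ j ∈ S, ∑ i ∈ S with i < j, (g i j + g j i) = ∑ j ∈ S, ∑ i ∈ S, g i j := by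
  have hswap : ∑ j ∈ S, ∑ i ∈ S with i < j, g j i = ∑ j ∈ S, ∑ i ∈ S with j < i, g i j := by
    simp only [sum_filter]
    exact sum_comm
  simp only [sum_add_distrib]
  rw [hswap, ← sum_add_distrib]
  refine sum_congr rfl fun j _ => ?_
  rw [sum_filter, sum_filter, ← sum_add_distrib]
  refine sum_congr rfl fun i _ => ?_
  rcases lt_trichotomy i j with h | rfl | h
  · simp [h, h.not_gt]
  · simp [hg]
  · simp [h, h.not_gt]


lemma sum_sum_lt_crossing {ι : Type*} [LinearOrder ι] (S : Finset ι) (P : ι → Prop)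
    [DecidablePred P] (w : ι → ℤ) :
    ∑ j ∈ S, ∑ i ∈ S with i < j,
        ((if P i ∧ ¬P j then w i else 0) + (if P j ∧ ¬P i then w j else 0)) =
      (∑ i ∈ S with P i, w i) * #{j ∈ S | ¬P j} := by
  rw [sum_sum_lt_add_swap S (fun i j => if P i ∧ ¬P j then w i else 0) (by simp)]
  calc ∑ j ∈ S, ∑ i ∈ S, (if P i ∧ ¬P j then w i else 0)
      = ∑ j ∈ S with ¬P j, ∑ i ∈ S with P i, w i := by
        rw [sum_filter]
        refine sum_congr rfl fun j _ => ?_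
        split_ifs with hj <;> simp [sum_filter, hj]
    _ = _ := by rw [sum_const, nsmul_eq_mul, mul_comm]

local notation "𝒫" => MvPolynomial ℕ (RatFunc ℚ)

def substVar (s : ℕ) (r : ℕ → ℕ) (j : ℕ) : ℕ :=
  if ∃ i, i < s ∧ r i = j then r s else j

def substExp (s : ℕ) (r k : ℕ → ℕ) (j : ℕ) : ℤ :=
  if h : ∃ i, i < s ∧ r i = j then (k s : ℤ) - (k h.choose : ℤ) else 0

lemma Esub_eq (s : ℕ) (r k : ℕ → ℕ) (j : ℕ) :
    Esub s r k j = algebraMap 𝒫 FF (X (substVar s r j)) * qq ^ substExp s r k j := by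
  unfold Esub substVar substExp
  split_ifs
  · rfl
  · rw [zpow_zero, mul_one]
    rfl

lemma substVar_eq_iff {s : ℕ} {r : ℕ → ℕ} {j : ℕ} : substVar s r j = r s ↔ ∃ i ≤ s, r i = j := by
  unfold substVar
  split_ifs with h
  · obtain ⟨i, hi, hij⟩ := h
    exact iff_of_true rfl ⟨i, hi.le, hij⟩
  · refine ⟨fun hj => ⟨s, le_rfl, hj.symm⟩, ?_⟩
    rintro ⟨i, hi, rfl⟩
    rcases hi.lt_or_eq with hi | rfl
    · exact absurd ⟨i, hi, rfl⟩ h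
    · rfl

lemma filter_substVar_eq_image {n s : ℕ} {r : ℕ → ℕ} (hr0 : r 0 = 0)
    (hr : StrictMonoOn r (Set.Iic s)) (hrn : r s ≤ n) :
    {j ∈ Icc 1 n | substVar s r j = r s} = (Icc 1 s).image r := by
  ext j
  simp only [mem_filter, mem_image, mem_Icc, substVar_eq_iff]
  constructor
  · rintro ⟨⟨hj, -⟩, i, hi, rfl⟩
    refine ⟨i, ⟨Nat.pos_of_ne_zero ?_, hi⟩, rfl⟩
    rintro rfl
    omega
  · rintro ⟨i, ⟨hi, his⟩, rfl⟩
    have h0 : r 0 < r i := hr (Nat.zero_le s) his (by omega)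
    have hs : r i ≤ r s := hr.monotoneOn his (le_refl s) his
    exact ⟨⟨by omega, by omega⟩, i, his, rfl⟩

lemma algebraMap_C_X_zpow (z : ℤ) : algebraMap 𝒫 FF (C (RatFunc.X ^ z)) = qq ^ z :=
  map_zpow₀ ((algebraMap 𝒫 FF).comp C) RatFunc.X z

lemma qq_ne_zero : qq ≠ 0 := by
  simp [qq, RatFunc.X_ne_zero]

def factorPair (s : ℕ) (r k : ℕ → ℕ) (γ : ℤ) (i j : ℕ) : 𝒫 × 𝒫 :=
  (X (substVar s r j) -
      C (RatFunc.X ^ (γ + substExp s r k i - substExp s r k j)) * X (substVar s r i),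
    X (substVar s r j))

lemma fracHom_factorPair (s : ℕ) (r k : ℕ → ℕ) (γ : ℤ) (i j : ℕ) :
    fracHom FF (factorPair s r k γ i j) = 1 - qq ^ γ * Esub s r k i / Esub s r k j := by
  have hX (m : ℕ) : algebraMap 𝒫 FF (X m) ≠ 0 := by simp
  simp only [fracHom_apply, factorPair, map_sub, map_mul, algebraMap_C_X_zpow, Esub_eq,
    zpow_sub₀ qq_ne_zero, zpow_add₀ qq_ne_zero]
  field_simp [hX, qq_ne_zero]

lemma fracHom_factorPair_natCast (s : ℕ) (r k : ℕ → ℕ) (c i j : ℕ) :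
    fracHom FF (factorPair s r k c i j) = 1 - qq ^ c * Esub s r k i / Esub s r k j := by
  rw [fracHom_factorPair, zpow_natCast]

lemma fracHom_factorPair_neg (s : ℕ) (r k : ℕ → ℕ) (c i j : ℕ) :
    fracHom FF (factorPair s r k (-c) i j) = 1 - Esub s r k i / (Esub s r k j * qq ^ c) := by
  rw [fracHom_factorPair, zpow_neg, zpow_natCast, div_mul_eq_div_div, inv_mul_eq_div,
    div_right_comm]

def qrkPair (n s b : ℕ) (a r k : ℕ → ℕ) : 𝒫 × 𝒫 :=
  (∏ j ∈ Icc 1 n, (∏ c ∈ range (a j), factorPair s r k ↑(c + 1) j 0) *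
    (∏ c ∈ (Icc 1 b).filter (fun c => ¬ ∃ i ∈ Icc 1 s, r i = j ∧ k i = c),
      factorPair s r k (-c) 0 j).swap) *
  ∏ j ∈ Icc 1 n, ∏ i ∈ Ioo 0 j,
    (∏ c ∈ range (a i), factorPair s r k c i j) * ∏ c ∈ range (a j), factorPair s r k ↑(c + 1) j i

lemma Qrk_eq_fracHom (n s b : ℕ) (a r k : ℕ → ℕ) :
    Qrk n s b a r k = fracHom FF (qrkPair n s b a r k) := by
  simp only [Qrk, qrkPair, map_mul, map_prod, fracHom_swap, fracHom_factorPair_natCast,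
    fracHom_factorPair_neg, div_eq_mul_inv]

section Degree

variable {n s b : ℕ} {a r k : ℕ → ℕ}

lemma degreeOfDiff_prod_factorPair {S : Finset ℕ} {γ : ℕ → ℤ} {i j : ℕ}
    (h : PairNeZero (∏ c ∈ S, factorPair s r k (γ c) i j)) :
    degreeOfDiff (r s) (∏ c ∈ S, factorPair s r k (γ c) i j) =
      #S * if substVar s r i = r s ∧ substVar s r j ≠ r s then 1 else 0 := by
  rw [pairNeZero_prod_iff] at h
  rw [degreeOfDiff_prod _ h, ← nsmul_eq_mul, ← sum_const]
  exact sum_congr rfl fun c hc =>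
    degreeOfDiff_X_sub_C_mul_X (zpow_ne_zero _ RatFunc.X_ne_zero) (h c hc).1

lemma degreeOfDiff_qrkPair (hr0 : r 0 = 0) (h : PairNeZero (qrkPair n s b a r k)) :
    degreeOfDiff (r s) (qrkPair n s b a r k) =
      -∑ j ∈ Icc 1 n with substVar s r j ≠ r s,
          (#{c ∈ Icc 1 b | ¬∃ i ∈ Icc 1 s, r i = j ∧ k i = c} : ℤ) +
        ∑ j ∈ Icc 1 n, ∑ i ∈ Ioo 0 j,
          ((if substVar s r i = r s ∧ substVar s r j ≠ r s then (a i : ℤ) else 0) +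
            (if substVar s r j = r s ∧ substVar s r i ≠ r s then (a j : ℤ) else 0)) := by
  have hcol0 : substVar s r 0 = r s := substVar_eq_iff.2 ⟨0, Nat.zero_le _, hr0⟩
  unfold qrkPair at h ⊢
  obtain ⟨hL, hR⟩ := pairNeZero_mul_iff.1 h
  rw [degreeOfDiff_mul _ hL hR]
  rw [pairNeZero_prod_iff] at hL hR
  rw [degreeOfDiff_prod _ hL, degreeOfDiff_prod _ hR, sum_filter, ← sum_neg_distrib]
  congr 1
  · refine sum_congr rfl fun j hj => ?_
    obtain ⟨hnum, hden⟩ := pairNeZero_mul_iff.1 (hL j hj)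
    rw [degreeOfDiff_mul _ hnum hden, degreeOfDiff_swap, degreeOfDiff_prod_factorPair hnum,
      degreeOfDiff_prod_factorPair (pairNeZero_swap_iff.1 hden)]
    simp [hcol0]
  · refine sum_congr rfl fun j hj => ?_
    have hrow := pairNeZero_prod_iff.1 (hR j hj)
    rw [degreeOfDiff_prod _ hrow]
    refine sum_congr rfl fun i hi => ?_
    obtain ⟨hij, hji⟩ := pairNeZero_mul_iff.1 (hrow i hi)
    rw [degreeOfDiff_mul _ hij hji, degreeOfDiff_prod_factorPair hij,
      degreeOfDiff_prod_factorPair hji]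
    simp only [card_range, mul_ite, mul_one, mul_zero]

lemma degreeOfDiff_qrkPair_eq (hr0 : r 0 = 0) (hr : StrictMonoOn r (Set.Iic s)) (hrn : r s ≤ n)
    (h : PairNeZero (qrkPair n s b a r k)) :
    degreeOfDiff (r s) (qrkPair n s b a r k) =
      ((n : ℤ) - s) * ((∑ i ∈ Icc 1 s, (a (r i) : ℤ)) - b) := by
  have hR := filter_substVar_eq_image hr0 hr hrn
  have hinj : Set.InjOn r (Icc 1 s) := hr.injOn.mono fun i hi => (mem_Icc.1 hi).2
  have hcard : (#{j ∈ Icc 1 n | substVar s r j ≠ r s} : ℤ) + s = n := by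
    have hsplit := card_filter_add_card_filter_not (s := Icc 1 n) (substVar s r · = r s)
    simp only [← ne_eq] at hsplit
    rw [hR, card_image_of_injOn hinj, Nat.card_Icc, Nat.card_Icc] at hsplit
    omega
  have hden : ∀ j ∈ {j ∈ Icc 1 n | substVar s r j ≠ r s},
      (#{c ∈ Icc 1 b | ¬∃ i ∈ Icc 1 s, r i = j ∧ k i = c} : ℤ) = b := by
    intro j hj
    have hmem : ∀ c ∈ Icc 1 b, ¬∃ i ∈ Icc 1 s, r i = j ∧ k i = c := by
      rintro c - ⟨i, hi, rfl, -⟩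
      exact (mem_filter.1 hj).2 (substVar_eq_iff.2 ⟨i, (mem_Icc.1 hi).2, rfl⟩)
    convert congrArg (fun S : Finset ℕ => (#S : ℤ)) (filter_true_of_mem hmem)
    simp
  have hIoo : ∀ j ∈ Icc 1 n, Ioo 0 j = {i ∈ Icc 1 n | i < j} := by
    intro j hj
    ext i
    simp only [mem_Ioo, mem_filter, mem_Icc] at hj ⊢
    omega
  rw [degreeOfDiff_qrkPair hr0 h, sum_congr rfl hden, sum_const,
    sum_congr rfl fun j hj => by rw [hIoo j hj], sum_sum_lt_crossing, hR, sum_image hinj,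
    nsmul_eq_mul]
  linear_combination ((∑ i ∈ Icc 1 s, (a (r i) : ℤ)) - b) * hcard

end Degree

theorem stmt19_general (n s b : ℕ) (a r k : ℕ → ℕ) (hsn : s < n)
    (hr0 : r 0 = 0)
    (hrmono : ∀ i, i < s → r i < r (i+1)) (hrn : r s ≤ n)
    (hk : ∀ i ∈ Icc 1 s, 1 ≤ k i ∧ k i ≤ b)
    (hex : ∃ i ∈ Icc 1 s, (∑ i' ∈ Icc 1 s, a (r i')) < k i) :
    ∃ N D : MvPolynomial ℕ (RatFunc ℚ), D ≠ 0 ∧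
      Qrk n s b a r k =
        algebraMap (MvPolynomial ℕ (RatFunc ℚ)) FF N /
          algebraMap (MvPolynomial ℕ (RatFunc ℚ)) FF D ∧
      (N.degreeOf (r s) : ℤ) - (D.degreeOf (r s) : ℤ) =
        ((n : ℤ) - s) * ((∑ i' ∈ Icc 1 s, (a (r i') : ℤ)) - b) ∧
      ((n : ℤ) - s) * ((∑ i' ∈ Icc 1 s, (a (r i') : ℤ)) - b) < 0 := by
  obtain ⟨i, hi, hlt⟩ := hex
  have hsum : ∑ i' ∈ Icc 1 s, a (r i') < b := hlt.trans_le (hk i hi).2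
  have hneg : ((n : ℤ) - s) * ((∑ i' ∈ Icc 1 s, (a (r i') : ℤ)) - b) < 0 := by
    have hsum' : ∑ i' ∈ Icc 1 s, (a (r i') : ℤ) < b := by exact_mod_cast hsum
    exact mul_neg_of_pos_of_neg (by omega) (by linarith)
  by_cases hQ : Qrk n s b a r k = 0
  · refine ⟨0, X (r s) ^ ((n - s) * (b - ∑ i' ∈ Icc 1 s, a (r i'))), by simp, by simp [hQ], ?_, hneg⟩
    simp only [degreeOf_zero, degreeOf_X_self_pow]
    push_cast [hsn.le, hsum.le]
    ring
  · have hr : StrictMonoOn r (Set.Iic s) := strictMonoOn_Iic_of_lt_succ (by simpa using hrmono)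
    have hF : PairNeZero (qrkPair n s b a r k) := fracHom_ne_zero_iff.1 (Qrk_eq_fracHom .. ▸ hQ)
    exact ⟨_, _, hF.2, Qrk_eq_fracHom .., degreeOfDiff_qrkPair_eq hr0 hr hrn hF, hneg⟩

/-- Properness (part of the proof of property (ii) of Lemma 4.1 of Gessel–Xin):
with `r 0 = k 0 = 0`, `0 < r 1 < ⋯ < r s ≤ n`, `s < n`, `1 ≤ k i ≤ b`, if
`k i > a_{r 1} + ⋯ + a_{r s}` for some `i`, then `𝒬(b ∣ 𝐫; 𝐤)` is a proper
rational function of `x_{r s}`: its degree in `x_{r s}` (numerator degree minus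
denominator degree) equals `(n - s)(a_{r 1} + ⋯ + a_{r s} - b)`, which is
negative. -/
theorem stmt19 (n s b : ℕ) (a r k : ℕ → ℕ) (hs : 1 ≤ s) (hsn : s < n) (hb : 0 < b)
    (hr0 : r 0 = 0) (hk0 : k 0 = 0)
    (hrmono : ∀ i, i < s → r i < r (i+1)) (hrn : r s ≤ n)
    (hk : ∀ i ∈ Icc 1 s, 1 ≤ k i ∧ k i ≤ b)
    (hex : ∃ i ∈ Icc 1 s, (∑ i' ∈ Icc 1 s, a (r i')) < k i) :
    ∃ N D : MvPolynomial ℕ (RatFunc ℚ), D ≠ 0 ∧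
      Qrk n s b a r k =
        algebraMap (MvPolynomial ℕ (RatFunc ℚ)) FF N /
          algebraMap (MvPolynomial ℕ (RatFunc ℚ)) FF D ∧
      (N.degreeOf (r s) : ℤ) - (D.degreeOf (r s) : ℤ) =
        ((n : ℤ) - s) * ((∑ i' ∈ Icc 1 s, (a (r i') : ℤ)) - b) ∧
      ((n : ℤ) - s) * ((∑ i' ∈ Icc 1 s, (a (r i') : ℤ)) - b) < 0 :=
  stmt19_general n s b a r k hsn hr0 hrmono hrn hk hex

end
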